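/- For c > 0 and integer n ≥ 2, the truncated series expansion η(n;c) = 3((n−1)/(n+1))[1 − ((n²+n+2)/((n−1)(n+2)))c] satisfies the eigen-recursion (λ₀ − α_n − β_n)η(n) + α_n η(n−1) + β_n η(n+1) = 0 up to O(c²), where α_n = n(n−1)/2, β_n = 2cn, η(1;c) = −2c, and λ₀ = 1 + (2/5)c² + O(c⁴) is taken to first order as λ₀ = 1. -/

import Mathlib

open Asymptotics Filter

/-- The truncated small-`c` expansion of the second eigenvector:
`η(1;c) = −2c` and `η(j;c) = 3((j−1)/(j+1))(1 − ((j²+j+2)/((j−1)(j+2)))c)` for `j ≥ 2`. -/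
noncomputable def eta19 (c : ℝ) (j : ℕ) : ℝ :=
  if j = 1 then -2*c
  else 3*(((j:ℝ)-1)/((j:ℝ)+1)) *
    (1 - (((j:ℝ)^2 + (j:ℝ) + 2)/(((j:ℝ)-1)*((j:ℝ)+2))) * c)

/-! The constant and linear coefficients of the residual cancel identically in `n`, so the
residual of the recursion is exactly a rational multiple of `c²`. The case `n = 2` is separate
because there `η(n−1) = η(1) = −2c` is the boundary value, not the general formula. -/

lemma eta19_recursion_residual (n : ℕ) (hn : 2 ≤ n) (c : ℝ) :
    (1 - (n:ℝ)*((n:ℝ)-1)/2 - 2*c*n) * eta19 c n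
      + ((n:ℝ)*((n:ℝ)-1)/2) * eta19 c (n-1) + (2*c*n) * eta19 c (n+1)
    = -12*(n:ℝ)*((n:ℝ)-1)/(((n:ℝ)+1)*((n:ℝ)+2)*((n:ℝ)+3)) * c^2 := by
  obtain rfl | hn3 := hn.eq_or_lt
  · norm_num [eta19]
    ring
  have hx : (3:ℝ) ≤ n := by exact_mod_cast hn3
  simp only [eta19, if_neg (show n ≠ 1 by omega), if_neg (show n - 1 ≠ 1 by omega),
    if_neg (show n + 1 ≠ 1 by omega), Nat.cast_sub (show 1 ≤ n by omega), Nat.cast_add,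
    Nat.cast_one]
  have hn_sub_two : (n:ℝ) - 1 - 1 ≠ 0 := by linarith
  have hn_sub_one : (n:ℝ) - 1 ≠ 0 := by linarith
  have hn_ne_zero : (n:ℝ) - 1 + 1 ≠ 0 := by linarith
  have hn_ne_zero' : (n:ℝ) + 1 - 1 ≠ 0 := by linarith
  have hn_add_one : (n:ℝ) - 1 + 2 ≠ 0 := by linarith
  field_simp
  ring

/-- For each `n ≥ 2`, the truncated expansion satisfies the
eigen-recursion `(λ₀ − α_n − β_n)η(n) + α_n η(n−1) + β_n η(n+1) = 0` up to `O(c²)`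
as `c → 0⁺`, with `λ₀` taken to first order as `1`, `α_n = n(n−1)/2`, `β_n = 2cn`. -/
theorem stmt19 (n : ℕ) (hn : 2 ≤ n) :
    (fun c : ℝ =>
        (1 - (n:ℝ)*((n:ℝ)-1)/2 - 2*c*n) * eta19 c n
          + ((n:ℝ)*((n:ℝ)-1)/2) * eta19 c (n-1) + (2*c*n) * eta19 c (n+1))
      =O[nhdsWithin 0 (Set.Ioi 0)] fun c : ℝ => c^2 :=
  ((isBigO_refl (fun c : ℝ => c^2) _).const_mul_left _).congr_left
    fun c => (eta19_recursion_residual n hn c).symm
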